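/- Let P be a regular p-gon inscribed in a circle of radius 1, and let S be a set of pairwise non-intersecting regular p-gons each inscribed in a circle of radius 1, all of which intersect P. Then |S| ≤ ⌈18π / (p·sin(2π/p))⌉. -/

import Mathlib

/-- The regular `p`-gon inscribed in the circle of radius 1 centered at `c`,
rotated by angle `θ`: the convex hull of the `p` points at angles
`2πk/p + θ` on the unit circle around `c`. -/
noncomputable def regularPolygon (p : ℕ) (c : EuclideanSpace ℝ (Fin 2)) (θ : ℝ) :
    Set (EuclideanSpace ℝ (Fin 2)) :=
  convexHull ℝ {x | ∃ k : Fin p,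
    x = c + (WithLp.equiv 2 (Fin 2 → ℝ)).symm
      ![Real.cos (2 * Real.pi * k / p + θ), Real.sin (2 * Real.pi * k / p + θ)]}


/-!
A polygon of the family meets `P`, so it lies in the disk of radius 3 around the center of `P`;
the polygons being pairwise disjoint, their areas add up to at most `9π`. The area of a regular
unit `p`-gon is at least `p sin(2π/p) / 2`, the total area of the `p` open triangles spanned by
its center and its sides: each is the image of the standard triangle under a linear map of
determinant `sin(2π/p)`, and they are pairwise disjoint because they lie in disjoint angles.
-/

open Real MeasureTheory Set
open scoped Pointwise ENNReal

local notation "E2" => EuclideanSpace ℝ (Fin 2)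

theorem card_mul_le_measure_of_pairwiseDisjoint {ι α : Type*} [MeasurableSpace α]
    (μ : Measure α) {S : Finset ι} {s : ι → Set α} {t : Set α} {m : ℝ≥0∞}
    (hdisj : (S : Set ι).PairwiseDisjoint s) (hmeas : ∀ i ∈ S, MeasurableSet (s i))
    (hsub : ∀ i ∈ S, s i ⊆ t) (hm : ∀ i ∈ S, m ≤ μ (s i)) :
    S.card * m ≤ μ t :=
  calc (S.card : ℝ≥0∞) * m = ∑ _ ∈ S, m := by rw [Finset.sum_const, nsmul_eq_mul]
    _ ≤ ∑ i ∈ S, μ (s i) := Finset.sum_le_sum hm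
    _ = μ (⋃ i ∈ S, s i) := (measure_biUnion_finset hdisj hmeas).symm
    _ ≤ μ t := measure_mono (iUnion₂_subset hsub)

theorem two_pi_div_lt_pi {p : ℕ} (hp : 2 < p) : 2 * π / p < π := by
  have hp' : (2 : ℝ) < p := by exact_mod_cast hp
  rw [div_lt_iff₀ (by positivity)]
  nlinarith [pi_pos]

theorem sin_two_pi_div_pos {p : ℕ} (hp : 2 < p) : 0 < sin (2 * π / p) :=
  sin_pos_of_pos_of_lt_pi (by positivity) (two_pi_div_lt_pi hp)

theorem sin_nonpos_of_pi_le_of_le_two_pi {x : ℝ} (h₁ : π ≤ x) (h₂ : x ≤ 2 * π) : sin x ≤ 0 := by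
  rw [← sin_sub_two_pi]
  exact sin_nonpos_of_nonpos_of_neg_pi_le (by linarith) (by linarith)

/-- The vector `a • unitVec 0 + b • unitVec β` lies in the angle `(0, β)`, hence not inside the
angle `(mβ, (m + 1)β)`; up to sign, the two combinations are its cross products with the sides of
the latter. -/
theorem sin_combination_nonneg_of_pos {a b β m : ℝ} (ha : 0 < a) (hb : 0 < b) (hβ : 0 < β)
    (hm : 1 ≤ m) (hmβ : (m + 1) * β ≤ 2 * π)
    (h : 0 < a * sin ((m + 1) * β) + b * sin (m * β)) :
    0 ≤ a * sin (m * β) + b * sin ((m - 1) * β) := by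
  have hmβ_pos : 0 < m * β := by nlinarith
  by_cases hsin : 0 < sin (m * β)
  · have hlt : m * β < π := by
      by_contra! hle
      linarith [sin_nonpos_of_pi_le_of_le_two_pi hle (by nlinarith)]
    have := sin_nonneg_of_nonneg_of_le_pi (x := (m - 1) * β) (by nlinarith) (by nlinarith)
    positivity
  · have hle : π ≤ m * β := by
      by_contra! hlt
      exact hsin (sin_pos_of_pos_of_lt_pi hmβ_pos hlt)
    have := sin_nonpos_of_pi_le_of_le_two_pi (x := (m + 1) * β) (by nlinarith) hmβ
    nlinarith

def cross (x y : E2) : ℝ := x 0 * y 1 - x 1 * y 0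

theorem cross_smul_add_left (a b : ℝ) (x y z : E2) :
    cross (a • x + b • y) z = a * cross x z + b * cross y z := by
  simp only [cross, PiLp.add_apply, PiLp.smul_apply, smul_eq_mul]; ring

theorem cross_smul_add_right (a b : ℝ) (x y z : E2) :
    cross z (a • x + b • y) = a * cross z x + b * cross z y := by
  simp only [cross, PiLp.add_apply, PiLp.smul_apply, smul_eq_mul]; ring

noncomputable def unitVec (a : ℝ) : E2 := !₂[cos a, sin a]

theorem unitVec_eq_repr_exp (a : ℝ) :
    unitVec a = Complex.orthonormalBasisOneI.repr (Complex.exp (a * Complex.I)) := by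
  ext i; fin_cases i <;> simp [unitVec, Complex.exp_ofReal_mul_I_re, Complex.exp_ofReal_mul_I_im]

theorem norm_unitVec (a : ℝ) : ‖unitVec a‖ = 1 := by
  simp [unitVec_eq_repr_exp, Complex.norm_exp_ofReal_mul_I]

theorem cross_unitVec (a b : ℝ) : cross (unitVec a) (unitVec b) = sin (b - a) := by
  simp [cross, unitVec, sin_sub]; ring

theorem unitVec_add_nat_mul_two_pi (a : ℝ) (n : ℕ) : unitVec (a + n * (2 * π)) = unitVec a := by
  simp [unitVec, cos_add_nat_mul_two_pi, sin_add_nat_mul_two_pi]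

theorem sum_unitVec_eq_zero {p : ℕ} (hp : 1 < p) (θ : ℝ) :
    ∑ k ∈ Finset.range p, unitVec (2 * π * k / p + θ) = 0 := by
  have hζ := Complex.isPrimitiveRoot_exp p (by omega)
  have hterm (k : ℕ) : Complex.exp ((2 * π * k / p + θ : ℝ) * Complex.I)
      = Complex.exp (θ * Complex.I) * Complex.exp (2 * π * Complex.I / p) ^ k := by
    rw [← Complex.exp_nat_mul, ← Complex.exp_add]
    congr 1
    push_cast
    ring
  simp_rw [unitVec_eq_repr_exp, ← map_sum, hterm, ← Finset.mul_sum, hζ.geom_sum_eq_zero hp,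
    mul_zero, map_zero]

def stdTriangle : Set E2 := {x | 0 < x 0 ∧ 0 < x 1 ∧ x 0 + x 1 < 1}

theorem isOpen_stdTriangle : IsOpen stdTriangle :=
  (isOpen_lt continuous_const (by fun_prop : Continuous fun x : E2 => x 0)).inter
    ((isOpen_lt continuous_const (by fun_prop : Continuous fun x : E2 => x 1)).inter
      (isOpen_lt (by fun_prop : Continuous fun x : E2 => x 0 + x 1) continuous_const))

theorem volume_stdTriangle : volume stdTriangle = ENNReal.ofReal (1 / 2) := by
  have hregion : {q : ℝ × ℝ | 0 < q.1 ∧ 0 < q.2 ∧ q.1 + q.2 < 1}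
      = regionBetween 0 (fun x => 1 - x) (Ioo 0 1) := by
    ext ⟨a, b⟩
    simp only [regionBetween, mem_ofPred_eq, mem_Ioo, Pi.zero_apply]
    constructor
    · rintro ⟨ha, hb, hab⟩; exact ⟨⟨ha, by linarith⟩, hb, by linarith⟩
    · rintro ⟨⟨ha, -⟩, hb, hab⟩; exact ⟨ha, hb, by linarith⟩
  have hpre : stdTriangle = (MeasurableEquiv.toLp 2 (Fin 2 → ℝ)).symm ⁻¹'
      (MeasurableEquiv.finTwoArrow ⁻¹' {q : ℝ × ℝ | 0 < q.1 ∧ 0 < q.2 ∧ q.1 + q.2 < 1}) := rfl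
  have hmeas : MeasurableSet {q : ℝ × ℝ | 0 < q.1 ∧ 0 < q.2 ∧ q.1 + q.2 < 1} := by
    rw [hregion]; exact measurableSet_regionBetween measurable_const (by fun_prop) measurableSet_Ioo
  rw [hpre, (EuclideanSpace.volume_preserving_symm_measurableEquiv_toLp (Fin 2)).measure_preimage
    (MeasurableEquiv.finTwoArrow.measurable hmeas).nullMeasurableSet,
    (volume_preserving_finTwoArrow ℝ).measure_preimage hmeas.nullMeasurableSet, hregion,
    Measure.volume_eq_prod, volume_regionBetween_eq_integral (f := 0) (g := fun x => 1 - x)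
      (continuous_const.integrableOn_Icc.mono_set Ioo_subset_Icc_self)
      ((continuous_const.sub continuous_id).integrableOn_Icc.mono_set Ioo_subset_Icc_self)
      measurableSet_Ioo (fun x hx => by simp; linarith [hx.2]),
    ← integral_Ioc_eq_integral_Ioo, ← intervalIntegral.integral_of_le zero_le_one]
  simp only [Pi.sub_apply, Pi.zero_apply, sub_zero]
  rw [intervalIntegral.integral_sub intervalIntegrable_const intervalIntegral.intervalIntegrable_id]
  norm_num [integral_id]

noncomputable def spanMap (u w : E2) : E2 →ₗ[ℝ] E2 := Matrix.toEuclideanLin !![u 0, w 0; u 1, w 1]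

theorem spanMap_apply (u w x : E2) : spanMap u w x = x 0 • u + x 1 • w := by
  ext i; fin_cases i <;> simp [spanMap, Matrix.mulVec, dotProduct, Fin.sum_univ_two] <;> ring

theorem det_spanMap (u w : E2) : LinearMap.det (spanMap u w) = cross u w := by
  rw [spanMap, Matrix.toEuclideanLin, Matrix.toLpLin_eq_toLin, LinearMap.det_toLin,
    Matrix.det_fin_two_of]
  simp only [cross]; ring

def openTriangle (c u w : E2) : Set E2 :=
  {x | ∃ a b : ℝ, 0 < a ∧ 0 < b ∧ a + b < 1 ∧ x = c + (a • u + b • w)}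

theorem openTriangle_eq_vadd_image (c u w : E2) :
    openTriangle c u w = c +ᵥ spanMap u w '' stdTriangle := by
  ext x
  simp only [openTriangle, stdTriangle, mem_vadd_set, mem_image, spanMap_apply, vadd_eq_add]
  constructor
  · rintro ⟨a, b, ha, hb, hab, rfl⟩
    exact ⟨_, ⟨!₂[a, b], ⟨ha, hb, hab⟩, rfl⟩, rfl⟩
  · rintro ⟨-, ⟨y, ⟨hy0, hy1, hy01⟩, rfl⟩, rfl⟩
    exact ⟨y 0, y 1, hy0, hy1, hy01, rfl⟩

theorem volume_openTriangle (c u w : E2) :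
    volume (openTriangle c u w) = ENNReal.ofReal (|cross u w| / 2) := by
  rw [openTriangle_eq_vadd_image, measure_vadd, Measure.addHaar_image_linearMap, det_spanMap,
    volume_stdTriangle, ← ENNReal.ofReal_mul (abs_nonneg _)]
  ring_nf

theorem measurableSet_openTriangle (c : E2) {u w : E2} (h : cross u w ≠ 0) :
    MeasurableSet (openTriangle c u w) := by
  have hinj : Function.Injective (spanMap u w) :=
    ((Module.End.isUnit_iff _).1 ((LinearMap.isUnit_iff_isUnit_det _).2
      (by rw [det_spanMap]; exact h.isUnit))).1
  rw [openTriangle_eq_vadd_image]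
  exact (isOpen_stdTriangle.measurableSet.image_of_continuousOn_injOn
    (spanMap u w).continuous_of_finiteDimensional.continuousOn hinj.injOn).const_vadd c

theorem Convex.openTriangle_subset {K : Set E2} (hK : Convex ℝ K) {c u w : E2} (hc : c ∈ K)
    (hu : c + u ∈ K) (hw : c + w ∈ K) : openTriangle c u w ⊆ K := by
  rintro _ ⟨a, b, ha, hb, hab, rfl⟩
  have hmem := hK.sum_mem (t := Finset.univ) (w := ![1 - a - b, a, b]) (z := ![c, c + u, c + w])
    (by simp [Fin.forall_fin_succ]; exact ⟨by linarith, ha.le, hb.le⟩)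
    (by simp [Fin.sum_univ_three]; ring) (by simp [Fin.forall_fin_succ, hc, hu, hw])
  convert hmem using 1
  simp [Fin.sum_univ_three]
  module

theorem disjoint_openTriangle_unitVec (c : E2) {α β m : ℝ} (hβ : 0 < β) (hβπ : β < π)
    (hm : 1 ≤ m) (hmβ : (m + 1) * β ≤ 2 * π) :
    Disjoint (openTriangle c (unitVec α) (unitVec (α + β)))
      (openTriangle c (unitVec (α + m * β)) (unitVec (α + (m + 1) * β))) := by
  rw [Set.disjoint_left]
  rintro _ ⟨a, b, ha, hb, -, rfl⟩ ⟨a', b', ha', hb', -, hx⟩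
  have hv := add_left_cancel hx
  have h₁ : a * sin ((m + 1) * β) + b * sin (m * β) = a' * sin β := by
    have := congrArg (cross · (unitVec (α + (m + 1) * β))) hv
    simp only [cross_smul_add_left, cross_unitVec, sub_self, sin_zero, mul_zero, add_zero] at this
    rwa [show α + (m + 1) * β - α = (m + 1) * β by ring,
      show α + (m + 1) * β - (α + β) = m * β by ring,
      show α + (m + 1) * β - (α + m * β) = β by ring] at this
  have h₂ : a * sin (m * β) + b * sin ((m - 1) * β) = -(b' * sin β) := by
    have := congrArg (cross (unitVec (α + m * β))) hv
    simp only [cross_smul_add_right, cross_unitVec, sub_self, sin_zero, mul_zero, zero_add] at this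
    rw [show α - (α + m * β) = -(m * β) by ring,
      show α + β - (α + m * β) = -((m - 1) * β) by ring,
      show α + (m + 1) * β - (α + m * β) = β by ring, sin_neg, sin_neg] at this
    linarith
  have hsin := sin_pos_of_pos_of_lt_pi hβ hβπ
  have := sin_combination_nonneg_of_pos ha hb hβ hm hmβ (by rw [h₁]; positivity)
  nlinarith

section RegularPolygon

variable {p : ℕ} (c : E2) (θ : ℝ)

theorem regularPolygon_eq_convexHull_range :
    regularPolygon p c θ =
      convexHull ℝ (range fun k : Fin p => c + unitVec (2 * π * k / p + θ)) := by
  rw [regularPolygon]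
  congr 1
  ext x
  exact exists_congr fun k => eq_comm

theorem add_unitVec_mem_regularPolygon (hp : 0 < p) (k : ℕ) :
    c + unitVec (2 * π * k / p + θ) ∈ regularPolygon p c θ := by
  have hangle : 2 * π * k / p + θ = 2 * π * (k % p : ℕ) / p + θ + (k / p : ℕ) * (2 * π) := by
    conv_lhs => rw [← Nat.mod_add_div k p]
    push_cast
    field_simp
    ring
  rw [hangle, unitVec_add_nat_mul_two_pi, regularPolygon_eq_convexHull_range]
  exact subset_convexHull ℝ _
    (mem_range_self (f := fun k : Fin p => c + unitVec (2 * π * k / p + θ)) ⟨k % p, k.mod_lt hp⟩)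

theorem center_mem_regularPolygon (hp : 1 < p) : c ∈ regularPolygon p c θ := by
  have hp₀ : (p : ℝ) ≠ 0 := by positivity
  have hmem := (convex_convexHull ℝ _).sum_mem (t := Finset.range p) (w := fun _ => (p : ℝ)⁻¹)
    (fun _ _ => by positivity) (by simp [hp₀])
    (fun k _ => add_unitVec_mem_regularPolygon c θ (by omega : 0 < p) k)
  rwa [← Finset.smul_sum, Finset.sum_add_distrib, sum_unitVec_eq_zero hp, add_zero,
    Finset.sum_const, Finset.card_range, ← Nat.cast_smul_eq_nsmul ℝ, smul_smul,
    inv_mul_cancel₀ hp₀, one_smul] at hmem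

theorem regularPolygon_subset_closedBall : regularPolygon p c θ ⊆ Metric.closedBall c 1 := by
  rw [regularPolygon_eq_convexHull_range]
  refine convexHull_min ?_ (convex_closedBall c 1)
  rintro _ ⟨k, rfl⟩
  rw [Metric.mem_closedBall, dist_self_add_left, norm_unitVec]

theorem measurableSet_regularPolygon : MeasurableSet (regularPolygon p c θ) := by
  rw [regularPolygon_eq_convexHull_range]
  exact ((finite_range _).isCompact_convexHull ℝ).measurableSet

theorem regularPolygon_subset_closedBall_three {c' : E2} {θ' : ℝ}
    (h : (regularPolygon p c' θ' ∩ regularPolygon p c θ).Nonempty) :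
    regularPolygon p c' θ' ⊆ Metric.closedBall c 3 := by
  obtain ⟨x, hx', hx⟩ := h
  intro y hy
  have hyc' := regularPolygon_subset_closedBall c' θ' hy
  have hxc' := regularPolygon_subset_closedBall c' θ' hx'
  have hxc := regularPolygon_subset_closedBall c θ hx
  rw [Metric.mem_closedBall] at hyc' hxc' hxc ⊢
  calc dist y c ≤ dist y c' + dist c' x + dist x c := dist_triangle4 y c' x c
    _ ≤ 1 + 1 + 1 := by rw [dist_comm c' x]; gcongr
    _ = 3 := by norm_num

noncomputable def regularPolygonSector (p : ℕ) (c : E2) (θ : ℝ) (k : ℕ) : Set E2 :=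
  openTriangle c (unitVec (2 * π * k / p + θ)) (unitVec (2 * π * (k + 1) / p + θ))

theorem cross_regularPolygon_side (p : ℕ) (θ : ℝ) (k : ℕ) :
    cross (unitVec (2 * π * k / p + θ)) (unitVec (2 * π * (k + 1) / p + θ)) = sin (2 * π / p) := by
  rw [cross_unitVec]
  congr 1
  ring

theorem volume_regularPolygonSector (hp : 3 ≤ p) (k : ℕ) :
    volume (regularPolygonSector p c θ k) = ENNReal.ofReal (sin (2 * π / p) / 2) := by
  rw [regularPolygonSector, volume_openTriangle, cross_regularPolygon_side,
    abs_of_pos (sin_two_pi_div_pos hp)]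

theorem measurableSet_regularPolygonSector (hp : 3 ≤ p) (k : ℕ) :
    MeasurableSet (regularPolygonSector p c θ k) :=
  measurableSet_openTriangle c <| by
    rw [cross_regularPolygon_side]; exact (sin_two_pi_div_pos hp).ne'

theorem regularPolygonSector_subset (hp : 1 < p) (k : ℕ) :
    regularPolygonSector p c θ k ⊆ regularPolygon p c θ := by
  refine (convex_convexHull ℝ _).openTriangle_subset (center_mem_regularPolygon c θ hp)
    (add_unitVec_mem_regularPolygon c θ (by omega) k) ?_
  exact_mod_cast add_unitVec_mem_regularPolygon c θ (by omega) (k + 1)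

theorem disjoint_regularPolygonSector (hp : 3 ≤ p) {k j : ℕ} (hkj : k < j) (hj : j < p) :
    Disjoint (regularPolygonSector p c θ k) (regularPolygonSector p c θ j) := by
  have hp₀ : (0 : ℝ) < p := by positivity
  have hm : (1 : ℝ) ≤ j - k := by
    have : (k : ℝ) + 1 ≤ j := by exact_mod_cast hkj
    linarith
  have hmβ : ((j - k : ℝ) + 1) * (2 * π / p) ≤ 2 * π := by
    have : (j : ℝ) + 1 ≤ p := by exact_mod_cast hj
    rw [← mul_div_assoc, div_le_iff₀ hp₀]
    nlinarith [pi_pos, (Nat.cast_nonneg k : (0 : ℝ) ≤ k)]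
  unfold regularPolygonSector
  convert disjoint_openTriangle_unitVec c (α := 2 * π * k / p + θ) (by positivity)
    (two_pi_div_lt_pi hp) hm hmβ
    using 3 <;> ring

theorem ofReal_le_volume_regularPolygon (hp : 3 ≤ p) :
    ENNReal.ofReal (p * sin (2 * π / p) / 2) ≤ volume (regularPolygon p c θ) := by
  have hsectors := card_mul_le_measure_of_pairwiseDisjoint volume (S := Finset.range p)
    (s := regularPolygonSector p c θ)
    (fun k hk j hj hne => by
      simp only [Finset.coe_range, mem_Iio] at hk hj
      rcases hne.lt_or_gt with h | h
      · exact disjoint_regularPolygonSector c θ hp h hj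
      · exact (disjoint_regularPolygonSector c θ hp h hk).symm)
    (fun k _ => measurableSet_regularPolygonSector c θ hp k)
    (fun k _ => regularPolygonSector_subset c θ (by omega) k)
    (fun k _ => (volume_regularPolygonSector c θ hp k).ge)
  rwa [Finset.card_range, ← ENNReal.ofReal_natCast, ← ENNReal.ofReal_mul (by positivity),
    ← mul_div_assoc] at hsectors

end RegularPolygon

/-- If a family of pairwise non-intersecting regular unit `p`-gons (each given
by a center and a rotation angle) all intersect a fixed regular unit `p`-gon,
then the family has at most `⌈18π / (p·sin(2π/p))⌉` members. -/
theorem regularPolygon_packing_bound (p : ℕ) (hp : 3 ≤ p)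
    (c : EuclideanSpace ℝ (Fin 2)) (θ : ℝ)
    (S : Finset (EuclideanSpace ℝ (Fin 2) × ℝ))
    (hint : ∀ q ∈ S, (regularPolygon p q.1 q.2 ∩ regularPolygon p c θ).Nonempty)
    (hdisj : ∀ q ∈ S, ∀ q' ∈ S, q ≠ q' →
      regularPolygon p q.1 q.2 ∩ regularPolygon p q'.1 q'.2 = ∅) :
    S.card ≤ ⌈18 * Real.pi / (p * Real.sin (2 * Real.pi / p))⌉₊ := by
  have hpack := card_mul_le_measure_of_pairwiseDisjoint volume
    (fun q hq q' hq' hne => disjoint_iff_inter_eq_empty.2 (hdisj q hq q' hq' hne))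
    (fun q _ => measurableSet_regularPolygon q.1 q.2)
    (fun q hq => regularPolygon_subset_closedBall_three c θ (hint q hq))
    (fun q _ => ofReal_le_volume_regularPolygon q.1 q.2 hp)
  have hsin := sin_two_pi_div_pos hp
  rw [EuclideanSpace.volume_closedBall_fin_two, ← ENNReal.ofReal_natCast,
    ← ENNReal.ofReal_mul (by positivity), ← ENNReal.ofReal_pow (by norm_num),
    ← ENNReal.ofReal_mul (by positivity), ENNReal.ofReal_le_ofReal_iff (by positivity)] at hpack
  have hcard : (S.card : ℝ) ≤ 18 * π / (p * sin (2 * π / p)) := by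
    rw [le_div_iff₀ (by positivity)]
    linarith
  exact_mod_cast hcard.trans (Nat.le_ceil _)
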